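/- No before-commit interference when no more swaps are enabled (Lemma 4): in the block-labelled execution setting, assume every block in the range of block is committed and no adjacent pair of T is swappable. Then no block b has a before-commit interference, i.e., there are no elements u, x ∈ T with block(u) = b, block(x) ≠ b, and u < x < commit(b). -/
import Mathlib


/-- Mover labels assigned to transitions: right mover, non-mover, left mover. -/
inductive Label where
  | R | N | L
deriving DecidableEq

open Classical in
/-- The label of a transition `t`: `R` if its block is uncommitted or `t` precedes the
commit transition of its block; `N` if `t` is the commit transition of its (committed)
block; `L` if `t` follows the commit transition of its (committed) block. -/
noncomputable def label {T β : Type*} [LinearOrder T]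
    (block : T → β) (Com : Set β) (commit : β → T) (t : T) : Label :=
  if block t ∈ Com then
    if t < commit (block t) then .R
    else if t = commit (block t) then .N
    else .L
  else .R

/-- The pair `(a, b)` (with `a < b` in execution order) is swappable. The linear order
on `β` plays the role of the arbitrary fixed total order `<_O` on blocks. -/
def Swappable {T β : Type*} [LinearOrder T] [LinearOrder β]
    (block : T → β) (Com : Set β) (commit : β → T) (a b : T) : Prop :=
  (block a ∉ Com ∧ block b ∈ Com) ∨
  (block a ∈ Com ∧ block b ∈ Com ∧ commit (block b) < commit (block a)) ∨
  (block a ∉ Com ∧ block b ∉ Com ∧ block b < block a)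

/-- Elements `a < b` are adjacent if no element lies strictly between them. -/
def Adjacent {T : Type*} [LinearOrder T] (a b : T) : Prop :=
  a < b ∧ ¬ ∃ c, a < c ∧ c < b

/-- No before-commit interference when no more swaps are enabled: if every block in the
range of `block` is committed and no adjacent pair is swappable, then no block has a
before-commit interference. -/
theorem no_before_commit_interference {T β : Type*} [LinearOrder T] [Fintype T]
    [LinearOrder β]
    (block : T → β) (Com : Set β) (commit : β → T)
    (hcommit : ∀ b ∈ Com, (∃ t, block t = b) → block (commit b) = b)
    (hall : ∀ b ∈ Set.range block, b ∈ Com)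
    (hnoswap : ∀ a b : T, Adjacent a b → ¬ Swappable block Com commit a b) :
    ¬ ∃ (b : β) (u x : T), block u = b ∧ block x ≠ b ∧ u < x ∧ x < commit b := by
  letI : LocallyFiniteOrder T := Fintype.toLocallyFiniteOrder
  have hCom : ∀ t : T, block t ∈ Com := fun t => hall _ ⟨t, rfl⟩
  have hadj : ∀ a b : T, Adjacent a b → commit (block a) ≤ commit (block b) := by
    intro a b h
    by_contra hlt
    exact hnoswap a b h (Or.inr (Or.inl ⟨hCom a, hCom b, lt_of_not_ge hlt⟩))
  have hmono : ∀ n : ℕ, ∀ a b : T, (Finset.Ioo a b).card ≤ n → a ≤ b →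
      commit (block a) ≤ commit (block b) := by
    intro n
    induction n with
    | zero =>
      intro a b hc hab
      rcases eq_or_lt_of_le hab with rfl | h
      · rfl
      · refine hadj a b ⟨h, ?_⟩
        rintro ⟨c, hc1, hc2⟩
        have hm : c ∈ Finset.Ioo a b := Finset.mem_Ioo.mpr ⟨hc1, hc2⟩
        rw [Finset.card_eq_zero.mp (Nat.le_zero.mp hc)] at hm
        exact absurd hm (Finset.notMem_empty c)
    | succ n ih =>
      intro a b hc hab
      rcases eq_or_lt_of_le hab with rfl | h
      · rfl
      by_cases hA : ∃ c, a < c ∧ c < b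
      · obtain ⟨c, h1, h2⟩ := hA
        have key : ∀ s t : T, s ∈ Finset.Ioo a b → s ∉ Finset.Ioo a t →
            (∀ x, x ∈ Finset.Ioo a t → x ∈ Finset.Ioo a b) → (Finset.Ioo a t).card ≤ n := by
          intro s t hs hns hsub
          have := Finset.card_lt_card (Finset.ssubset_iff_of_subset hsub |>.mpr ⟨s, hs, hns⟩)
          omega
        have hc1 : (Finset.Ioo a c).card ≤ n := by
          have hsub : (Finset.Ioo a c) ⊆ (Finset.Ioo a b) := by
            intro x hx
            simp only [Finset.mem_Ioo] at *
            exact ⟨hx.1, hx.2.trans h2⟩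
          have hss : (Finset.Ioo a c) ⊂ (Finset.Ioo a b) :=
            (Finset.ssubset_iff_of_subset hsub).mpr
              ⟨c, Finset.mem_Ioo.mpr ⟨h1, h2⟩, by simp [Finset.mem_Ioo]⟩
          have := Finset.card_lt_card hss
          omega
        have hc2 : (Finset.Ioo c b).card ≤ n := by
          have hsub : (Finset.Ioo c b) ⊆ (Finset.Ioo a b) := by
            intro x hx
            simp only [Finset.mem_Ioo] at *
            exact ⟨h1.trans hx.1, hx.2⟩
          have hss : (Finset.Ioo c b) ⊂ (Finset.Ioo a b) :=
            (Finset.ssubset_iff_of_subset hsub).mpr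
              ⟨c, Finset.mem_Ioo.mpr ⟨h1, h2⟩, by simp [Finset.mem_Ioo]⟩
          have := Finset.card_lt_card hss
          omega
        exact (ih a c hc1 h1.le).trans (ih c b hc2 h2.le)
      · exact hadj a b ⟨h, hA⟩
  have hmono' : ∀ a b : T, a ≤ b → commit (block a) ≤ commit (block b) :=
    fun a b hab => hmono (Finset.Ioo a b).card a b le_rfl hab
  rintro ⟨b, u, x, hbu, hbx, hux, hxc⟩
  have hbCom : b ∈ Com := hbu ▸ hCom u
  have hcb : block (commit b) = b := hcommit b hbCom ⟨u, hbu⟩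
  have h1 : commit b ≤ commit (block x) := by
    have := hmono' u x hux.le
    rwa [hbu] at this
  have h2 : commit (block x) ≤ commit b := by
    have := hmono' x (commit b) hxc.le
    rwa [hcb] at this
  have heq : commit (block x) = commit b := le_antisymm h2 h1
  have : block x = b := by
    have := hcommit (block x) (hCom x) ⟨x, rfl⟩
    rw [heq, hcb] at this
    exact this.symm
  exact hbx this
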